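/- arXiv:2512.04826 — 7 statements merged into one kernel-verified Lean document; each statement's English description precedes it below -/
import Mathlib

section
/- Let W : ℝ → ℝ be strictly increasing and right-continuous on [c₁,c₂]. If F is W-absolutely continuous with D⁻_W F(x) = f(x) for all x ∈ (c₁,c₂] (where D⁻_W F(x) = lim_{h→0⁻} (F(x+h)-F(x))/(W(x+h)-W(x))), and f is left-continuous and locally integrable with respect to the Lebesgue–Stieltjes measure dW, then for all c₁ ≤ a₁ ≤ a₂ ≤ c₂, ∫_{(a₁,a₂]} f dW = F(a₂) − F(a₁). -/
open MeasureTheory Set Filter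

/-- `F` is `W`-absolutely continuous on `[c₁, c₂]`: for every `ε > 0` there is `δ > 0` such
that for every finite disjoint family of subintervals `(aᵢ, bᵢ] ⊆ [c₁, c₂]` with total
`W`-length less than `δ`, the total variation of `F` over them is less than `ε`. -/
def WAbsolutelyContinuousOn (W F : ℝ → ℝ) (c₁ c₂ : ℝ) : Prop :=
  ∀ ε > (0 : ℝ), ∃ δ > (0 : ℝ), ∀ (n : ℕ) (a b : Fin n → ℝ),
    (∀ i, c₁ ≤ a i ∧ a i ≤ b i ∧ b i ≤ c₂) →
    (Pairwise fun i j => Disjoint (Set.Ioc (a i) (b i)) (Set.Ioc (a j) (b j))) →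
    (∑ i, (W (b i) - W (a i))) < δ →
    (∑ i, |F (b i) - F (a i)|) < ε

/-! Put `G x = F x - ∫_{(a₁,x]} f dW`. Left-differentiability of `F` and left-continuity of `f`
give, for each `ε > 0`, `|G x - G y| ≤ ε (W x - W y)` for all `y` slightly to the left of `x`, while
absolute continuity of `F` and right-continuity of `W` make `G` right-continuous. A continuity
induction running leftwards from `a₂` (through the infimum of the points `x` at which
`|G a₂ - G x| ≤ ε (W a₂ - W x)`) gives `|G a₂ - G a₁| ≤ ε (W a₂ - W a₁)` for every `ε > 0`,
hence `G a₂ = G a₁`. -/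

open Topology

theorem abs_sub_le_mul_sub_of_forall_eventually_nhdsLT {G W : ℝ → ℝ} {a b ε : ℝ}
    (hab : a ≤ b) (hε : 0 ≤ ε) (hW : MonotoneOn W (Icc a b))
    (hG : ∀ x ∈ Ico a b, ContinuousWithinAt G (Ici x) x)
    (hloc : ∀ x ∈ Ioc a b, ∀ᶠ y in 𝓝[<] x, |G x - G y| ≤ ε * (W x - W y)) :
    |G b - G a| ≤ ε * (W b - W a) := by
  set S := {x ∈ Icc a b | |G b - G x| ≤ ε * (W b - W x)}
  have hbS : b ∈ S := ⟨⟨hab, le_rfl⟩, by simp⟩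
  have hbdd : BddBelow S := ⟨a, fun x hx => hx.1.1⟩
  set m := sInf S
  have ham : a ≤ m := le_csInf ⟨b, hbS⟩ fun x hx => hx.1.1
  have hmb : m ≤ b := csInf_le hbdd hbS
  have hmS : m ∈ S := by
    rcases hmb.eq_or_lt with hmb | hmb
    · rwa [hmb]
    refine ⟨⟨ham, hmb.le⟩, ?_⟩
    -- `S` lies to the right of `m`, where `W ≥ W m`, and `G` is right-continuous at `m`.
    refine ContinuousWithinAt.closure_le (csInf_mem_closure ⟨b, hbS⟩ hbdd)
      (continuousWithinAt_const.sub ((hG m ⟨ham, hmb⟩).mono fun x hx => csInf_le hbdd hx)).abs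
      continuousWithinAt_const fun y hy => hy.2.trans ?_
    have := hW ⟨ham, hmb.le⟩ hy.1 (csInf_le hbdd hy)
    gcongr
  have hma : m = a := by
    by_contra hne
    have ham' : a < m := ham.lt_of_ne' hne
    obtain ⟨y, hy, hyam⟩ := ((hloc m ⟨ham', hmb⟩).and (Ioo_mem_nhdsLT ham')).exists
    have hyS : y ∈ S := by
      refine ⟨⟨hyam.1.le, hyam.2.le.trans hmb⟩, ?_⟩
      calc |G b - G y| ≤ |G b - G m| + |G m - G y| := abs_sub_le _ _ _
        _ ≤ ε * (W b - W m) + ε * (W m - W y) := add_le_add hmS.2 hy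
        _ = ε * (W b - W y) := by ring
    exact (csInf_le hbdd hyS).not_gt hyam.2
  simpa [hma] using hmS.2

theorem eq_of_forall_eventually_nhdsLT_abs_sub_le {G W : ℝ → ℝ} {a b : ℝ}
    (hab : a ≤ b) (hW : MonotoneOn W (Icc a b))
    (hG : ∀ x ∈ Ico a b, ContinuousWithinAt G (Ici x) x)
    (hloc : ∀ ε > 0, ∀ x ∈ Ioc a b, ∀ᶠ y in 𝓝[<] x, |G x - G y| ≤ ε * (W x - W y)) :
    G b = G a := by
  have hle : ∀ ε ∈ Ioi (0 : ℝ), |G b - G a| ≤ ε * (W b - W a) := fun ε hε =>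
    abs_sub_le_mul_sub_of_forall_eventually_nhdsLT hab (le_of_lt hε) hW hG (hloc ε hε)
  have hlim : Tendsto (fun ε => ε * (W b - W a)) (𝓝[>] 0) (𝓝 0) := by
    have := (tendsto_id (x := 𝓝 (0 : ℝ))).mul_const (W b - W a)
    rw [zero_mul] at this
    exact this.mono_left nhdsWithin_le_nhds
  have h0 : |G b - G a| ≤ 0 := ge_of_tendsto hlim (eventually_nhdsWithin_of_forall hle)
  exact sub_eq_zero.1 (abs_nonpos_iff.1 h0)

theorem WAbsolutelyContinuousOn.continuousWithinAt_Ici {W F : ℝ → ℝ} {c₁ c₂ x : ℝ}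
    (hF : WAbsolutelyContinuousOn W F c₁ c₂) (hW : ContinuousWithinAt W (Ici x) x)
    (hx : x ∈ Ico c₁ c₂) : ContinuousWithinAt F (Ici x) x := by
  rw [Metric.continuousWithinAt_iff] at hW ⊢
  intro ε hε
  obtain ⟨δ, hδ, hFδ⟩ := hF ε hε
  obtain ⟨η, hη, hWη⟩ := hW δ hδ
  refine ⟨min η (c₂ - x), lt_min hη (sub_pos.2 hx.2), fun {y} hy hyx => ?_⟩
  have hyc₂ : y ≤ c₂ := by
    rw [Real.dist_eq, abs_of_nonneg (sub_nonneg.2 hy)] at hyx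
    linarith [min_le_right η (c₂ - x)]
  have hWy : W y - W x < δ :=
    (le_abs_self _).trans_lt (hWη hy (hyx.trans_le (min_le_left _ _)))
  have := hFδ 1 (fun _ => x) (fun _ => y) (fun _ => ⟨hx.1, hy, hyc₂⟩) Subsingleton.pairwise
    (by simpa using hWy)
  simpa [Real.dist_eq] using this

theorem StieltjesFunction.measureReal_Ioc (W : StieltjesFunction ℝ) {a b : ℝ} (hab : a ≤ b) :
    W.measure.real (Ioc a b) = W b - W a := by
  rw [measureReal_def, W.measure_Ioc, ENNReal.toReal_ofReal (sub_nonneg.2 (W.mono hab))]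

theorem StieltjesFunction.continuousWithinAt_Ici_intervalIntegral (W : StieltjesFunction ℝ)
    {f : ℝ → ℝ} {a b x : ℝ} (hf : IntervalIntegrable f W.measure a b) (hx : x ∈ Ico a b) :
    ContinuousWithinAt (fun y => ∫ t in a..y, f t ∂W.measure) (Ici x) x := by
  have hfx : IntegrableOn f (Ioc x b) W.measure :=
    hf.1.mono_set (Ioc_subset_Ioc_left hx.1)
  have hμ : Tendsto (fun y => W.measure.restrict (Ioc x b) (Ioc x y)) (𝓝[≥] x) (𝓝 0) := by
    refine tendsto_of_tendsto_of_tendsto_of_le_of_le tendsto_const_nhds ?_ (fun _ => zero_le)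
      fun y => Measure.restrict_apply_le _ _
    simp_rw [W.measure_Ioc]
    simpa using ENNReal.tendsto_ofReal ((W.right_continuous x).tendsto.sub_const (W x))
  have hsplit : ∀ᶠ y in 𝓝[≥] x, (∫ t in a..x, f t ∂W.measure) +
      ∫ t in Ioc x y, f t ∂W.measure.restrict (Ioc x b) = ∫ t in a..y, f t ∂W.measure := by
    filter_upwards [Ico_mem_nhdsGE hx.2] with y hy
    rw [Measure.restrict_restrict_of_subset (Ioc_subset_Ioc_right hy.2.le),
      ← intervalIntegral.integral_of_le hy.1, intervalIntegral.integral_add_adjacent_intervals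
        (hf.mono_set (uIcc_subset_uIcc left_mem_uIcc (mem_uIcc_of_le hx.1 hx.2.le)))
        (hf.mono_set (uIcc_subset_uIcc (mem_uIcc_of_le hx.1 hx.2.le)
          (mem_uIcc_of_le (hx.1.trans hy.1) hy.2.le)))]
  have := (tendsto_const_nhds (x := ∫ t in a..x, f t ∂W.measure)).add
    (hfx.tendsto_setIntegral_nhds_zero hμ)
  rw [add_zero] at this
  exact this.congr' hsplit

theorem eventually_abs_sub_sub_mul_le_of_tendsto_slope_nhdsLT {W F : ℝ → ℝ} {x L ε : ℝ}
    (hW : ∀ᶠ y in 𝓝[<] x, W y < W x)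
    (hd : Tendsto (fun h => (F (x + h) - F x) / (W (x + h) - W x)) (𝓝[<] 0) (𝓝 L))
    (hε : 0 < ε) : ∀ᶠ y in 𝓝[<] x, |F x - F y - L * (W x - W y)| ≤ ε * (W x - W y) := by
  have hd' : Tendsto (fun y => (F y - F x) / (W y - W x)) (𝓝[<] x) (𝓝 L) := by
    have hsub : Tendsto (· - x) (𝓝[<] x) (𝓝[<] 0) := by
      rw [← sub_self x, ← map_subRight_nhdsLT]
      exact tendsto_map
    have := hd.comp hsub
    simpa [Function.comp_def] using this
  filter_upwards [hW, hd'.eventually (Metric.closedBall_mem_nhds L hε)] with y hWy hy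
  rw [Real.dist_eq] at hy
  have hWxy : 0 < W x - W y := sub_pos.2 hWy
  have hq : F x - F y - L * (W x - W y) = ((F y - F x) / (W y - W x) - L) * (W x - W y) := by
    field_simp [(sub_neg.2 hWy).ne]
    ring
  calc |F x - F y - L * (W x - W y)| = |(F y - F x) / (W y - W x) - L| * (W x - W y) := by
        rw [hq, abs_mul, abs_of_pos hWxy]
    _ ≤ ε * (W x - W y) := mul_le_mul_of_nonneg_right hy hWxy.le

theorem eventually_abs_setIntegral_Ioc_sub_le {μ : Measure ℝ} [IsLocallyFiniteMeasure μ]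
    {f : ℝ → ℝ} {a x ε : ℝ} (hax : a < x) (hint : IntegrableOn f (Ioc a x) μ)
    (hf : ContinuousWithinAt f (Iic x) x) (hε : 0 < ε) :
    ∀ᶠ y in 𝓝[<] x,
      |∫ t in Ioc y x, f t ∂μ - f x * μ.real (Ioc y x)| ≤ ε * μ.real (Ioc y x) := by
  obtain ⟨δ, hδ, hfδ⟩ := Metric.continuousWithinAt_iff.1 hf ε hε
  filter_upwards [Ioo_mem_nhdsLT (max_lt hax (sub_lt_self x hδ))] with y hy
  have hfin : μ (Ioc y x) < ⊤ := measure_Ioc_lt_top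
  have hint' : IntegrableOn f (Ioc y x) μ :=
    hint.mono_set (Ioc_subset_Ioc_left ((le_max_left a _).trans hy.1.le))
  rw [show f x * μ.real (Ioc y x) = ∫ _ in Ioc y x, f x ∂μ by
      rw [setIntegral_const, smul_eq_mul, mul_comm],
    ← integral_sub hint' (integrableOn_const hfin.ne)]
  refine (norm_setIntegral_le_of_norm_le_const (f := fun t => f t - f x) hfin fun t ht => ?_)
  rw [← dist_eq_norm]
  refine (hfδ ht.2 ?_).le
  rw [Real.dist_eq, abs_of_nonpos (by linarith [ht.2])]
  linarith [ht.1, le_max_right a (x - δ), hy.1]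

theorem StieltjesFunction.eventually_abs_sub_sub_intervalIntegral_le (W : StieltjesFunction ℝ)
    {F f : ℝ → ℝ} {a x ε : ℝ} (hax : a < x) (hW : ∀ᶠ y in 𝓝[<] x, W y < W x)
    (hd : Tendsto (fun h => (F (x + h) - F x) / (W (x + h) - W x)) (𝓝[<] 0) (𝓝 (f x)))
    (hf : ContinuousWithinAt f (Iic x) x) (hint : IntegrableOn f (Ioc a x) W.measure)
    (hε : 0 < ε) :
    ∀ᶠ y in 𝓝[<] x, |F x - F y - ∫ t in y..x, f t ∂W.measure| ≤ ε * (W x - W y) := by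
  filter_upwards [eventually_abs_sub_sub_mul_le_of_tendsto_slope_nhdsLT hW hd (half_pos hε),
    eventually_abs_setIntegral_Ioc_sub_le hax hint hf (half_pos hε), self_mem_nhdsWithin]
    with y hF hI hyx
  rw [W.measureReal_Ioc (le_of_lt hyx)] at hI
  rw [intervalIntegral.integral_of_le (le_of_lt hyx)]
  calc |F x - F y - ∫ t in Ioc y x, f t ∂W.measure|
      = |(F x - F y - f x * (W x - W y)) -
          (∫ t in Ioc y x, f t ∂W.measure - f x * (W x - W y))| := by ring_nf
    _ ≤ |F x - F y - f x * (W x - W y)| +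
          |∫ t in Ioc y x, f t ∂W.measure - f x * (W x - W y)| := abs_sub _ _
    _ ≤ ε / 2 * (W x - W y) + ε / 2 * (W x - W y) := add_le_add hF hI
    _ = ε * (W x - W y) := by ring

theorem stmt0_general (W : StieltjesFunction ℝ) (F f : ℝ → ℝ) (c₁ c₂ : ℝ)
    (hW : StrictMonoOn W (Set.Icc c₁ c₂))
    (hFac : WAbsolutelyContinuousOn W F c₁ c₂)
    (hderiv : ∀ x ∈ Set.Ioc c₁ c₂,
      Tendsto (fun h : ℝ => (F (x + h) - F x) / (W (x + h) - W x))
        (nhdsWithin 0 (Set.Iio 0)) (nhds (f x)))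
    (hf_left : ∀ x ∈ Set.Ioc c₁ c₂, ContinuousWithinAt f (Set.Iic x) x)
    (hf_int : IntegrableOn f (Set.Icc c₁ c₂) W.measure) :
    ∀ a₁ a₂ : ℝ, c₁ ≤ a₁ → a₁ ≤ a₂ → a₂ ≤ c₂ →
      ∫ x in Set.Ioc a₁ a₂, f x ∂W.measure = F a₂ - F a₁ := by
  intro a₁ a₂ h₁ h₁₂ h₂
  have hI : IntervalIntegrable f W.measure a₁ a₂ :=
    (intervalIntegrable_iff_integrableOn_Ioc_of_le h₁₂).2
      (hf_int.mono_set (Ioc_subset_Icc_self.trans (Icc_subset_Icc h₁ h₂)))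
  have hI' : ∀ x ∈ Icc a₁ a₂, IntervalIntegrable f W.measure a₁ x := fun x hx =>
    hI.mono_set (uIcc_subset_uIcc left_mem_uIcc (mem_uIcc_of_le hx.1 hx.2))
  set G := fun x => F x - ∫ t in a₁..x, f t ∂W.measure
  have hG : G a₂ = G a₁ := by
    refine eq_of_forall_eventually_nhdsLT_abs_sub_le h₁₂ (W.mono.monotoneOn _) (fun x hx => ?_)
      fun ε hε x hx => ?_
    · exact (hFac.continuousWithinAt_Ici (W.right_continuous x)
        ⟨h₁.trans hx.1, hx.2.trans_le h₂⟩).sub (W.continuousWithinAt_Ici_intervalIntegral hI hx)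
    have hxc : x ∈ Ioc c₁ c₂ := ⟨h₁.trans_lt hx.1, hx.2.trans h₂⟩
    have hWx : ∀ᶠ y in 𝓝[<] x, W y < W x := by
      filter_upwards [Ioo_mem_nhdsLT hxc.1] with y hy
      exact hW ⟨hy.1.le, hy.2.le.trans hxc.2⟩ ⟨hxc.1.le, hxc.2⟩ hy.2
    filter_upwards [W.eventually_abs_sub_sub_intervalIntegral_le hx.1 hWx (hderiv x hxc)
      (hf_left x hxc) (hI' x (Ioc_subset_Icc_self hx)).1 hε, Ioo_mem_nhdsLT hx.1] with y hy hya
    rwa [show G x - G y = F x - F y - ∫ t in y..x, f t ∂W.measure by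
      rw [← intervalIntegral.integral_interval_sub_left (hI' x (Ioc_subset_Icc_self hx))
        (hI' y ⟨hya.1.le, hya.2.le.trans hx.2⟩)]
      ring]
  simp only [G, intervalIntegral.integral_same, intervalIntegral.integral_of_le h₁₂] at hG
  linarith

/-- Fundamental theorem of calculus for the `W`-left derivative: if `F` is `W`-absolutely
continuous with `D⁻_W F = f` on `(c₁, c₂]`, `f` left-continuous and `dW`-integrable, then
`∫_{(a₁,a₂]} f dW = F(a₂) − F(a₁)`. -/
theorem stmt0 (W : StieltjesFunction ℝ) (F f : ℝ → ℝ) (c₁ c₂ : ℝ) (hc : c₁ ≤ c₂)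
    (hW : StrictMonoOn W (Set.Icc c₁ c₂))
    (hFac : WAbsolutelyContinuousOn W F c₁ c₂)
    (hderiv : ∀ x ∈ Set.Ioc c₁ c₂,
      Tendsto (fun h : ℝ => (F (x + h) - F x) / (W (x + h) - W x))
        (nhdsWithin 0 (Set.Iio 0)) (nhds (f x)))
    (hf_left : ∀ x ∈ Set.Ioc c₁ c₂, ContinuousWithinAt f (Set.Iic x) x)
    (hf_int : IntegrableOn f (Set.Icc c₁ c₂) W.measure) :
    ∀ a₁ a₂ : ℝ, c₁ ≤ a₁ → a₁ ≤ a₂ → a₂ ≤ c₂ →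
      ∫ x in Set.Ioc a₁ a₂, f x ∂W.measure = F a₂ - F a₁ :=
  stmt0_general W F f c₁ c₂ hW hFac hderiv hf_left hf_int
end

section
/- Let W be strictly increasing and right-continuous on [0,1] with W(0)=0, and let n ≥ 0 be an integer. Then for all x ∈ [0,1], ∫_{(0,x]} W(ξ⁻)ⁿ dW(ξ) ≤ W(x)^{n+1}/(n+1), where W(ξ⁻) denotes the left limit of W at ξ and dW is the Lebesgue–Stieltjes measure induced by W. -/
open MeasureTheory Set Function

/-!
By the layer-cake formula, `∫ Gⁿ dμ = ∫₀^∞ n tⁿ⁻¹ μ{G ≥ t} dt` for `G = W(·⁻)` and `μ = dW` on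
`(0, x]`. Since `G` is monotone, `{G ≥ t} ∩ (0, x]` is an interval ending at `x` whose infimum `s`
may or may not belong to it; its `dW`-mass is then `W x - W(s⁻)` or `W x - W s`, and both are at
most `W x - t` (in the second case by right-continuity at `s`). Hence the integral is at most
`∫₀^{W x} n tⁿ⁻¹ (W x - t) dt = W(x)ⁿ⁺¹/(n+1)`.
-/

namespace StieltjesFunction

theorem measure_le_leftLim_inter_Ioc_le (W : StieltjesFunction ℝ) (t a x : ℝ) :
    W.measure ({ξ | t ≤ leftLim W ξ} ∩ Ioc a x) ≤ ENNReal.ofReal (W x - t) := by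
  set A := {ξ | t ≤ leftLim W ξ} ∩ Ioc a x
  rcases A.eq_empty_or_nonempty with hA | hA
  · simp [hA]
  have hbdd : BddBelow A := ⟨a, fun ξ hξ => hξ.2.1.le⟩
  set s := sInf A
  have hs_le : ∀ ξ ∈ A, s ≤ ξ := fun ξ hξ => csInf_le hbdd hξ
  by_cases hs : t ≤ leftLim W s
  · calc W.measure A ≤ W.measure (Icc s x) := measure_mono fun ξ hξ => ⟨hs_le ξ hξ, hξ.2.2⟩
      _ = ENNReal.ofReal (W x - leftLim W s) := W.measure_Icc s x
      _ ≤ ENNReal.ofReal (W x - t) := ENNReal.ofReal_le_ofReal (by linarith)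
  · have hts : t ≤ W s := by
      rw [← W.iInf_Ioi_eq s]
      refine le_ciInf fun r => ?_
      obtain ⟨ξ, hξA, hξr⟩ := exists_lt_of_csInf_lt hA r.2
      calc t ≤ leftLim W ξ := hξA.1
        _ ≤ W ξ := W.mono.leftLim_le le_rfl
        _ ≤ W r := W.mono hξr.le
    have hA_sub : A ⊆ Ioc s x := fun ξ hξ =>
      ⟨(hs_le ξ hξ).lt_of_ne (by rintro rfl; exact hs hξ.1), hξ.2.2⟩
    calc W.measure A ≤ W.measure (Ioc s x) := measure_mono hA_sub
      _ = ENNReal.ofReal (W x - W s) := W.measure_Ioc s x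
      _ ≤ ENNReal.ofReal (W x - t) := ENNReal.ofReal_le_ofReal (by linarith)

end StieltjesFunction

theorem integral_sub_mul_pow (m : ℕ) (c : ℝ) :
    ∫ t in (0:ℝ)..c, (c - t) * ((m + 1) * t ^ m) = c ^ (m + 2) / (m + 2) := by
  have h : ∀ t : ℝ, (c - t) * ((m + 1) * t ^ m) = c * (m + 1) * t ^ m - (m + 1) * t ^ (m + 1) := by
    intro t; ring
  simp_rw [h]
  rw [intervalIntegral.integral_sub (by simp) (by simp)]
  simp only [intervalIntegral.integral_const_mul, integral_pow]
  push_cast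
  field_simp
  ring

theorem lintegral_Ioi_ofReal_sub_mul_pow (m : ℕ) {c : ℝ} (hc : 0 ≤ c) :
    ∫⁻ t in Ioi 0, ENNReal.ofReal (c - t) * ENNReal.ofReal ((m + 1) * t ^ m) =
      ENNReal.ofReal (c ^ (m + 2) / (m + 2)) := by
  rw [← Ioc_union_Ioi_eq_Ioi hc, lintegral_union measurableSet_Ioi (Ioc_disjoint_Ioi le_rfl),
    ← integral_sub_mul_pow, intervalIntegral.integral_of_le hc,
    ofReal_integral_eq_lintegral_ofReal]
  · have hIoi : ∫⁻ t in Ioi c, ENNReal.ofReal (c - t) * ENNReal.ofReal ((m + 1) * t ^ m) = 0 :=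
      (setLIntegral_congr_fun measurableSet_Ioi fun t (ht : c < t) => by
        rw [ENNReal.ofReal_of_nonpos (by linarith), zero_mul]).trans lintegral_zero
    rw [hIoi, add_zero]
    exact setLIntegral_congr_fun measurableSet_Ioc fun t ht =>
      (ENNReal.ofReal_mul (by linarith [ht.2])).symm
  · exact (by fun_prop : Continuous fun t : ℝ => (c - t) * ((m + 1) * t ^ m)).integrableOn_Ioc
  · exact ae_restrict_of_forall_mem measurableSet_Ioc fun t ht =>
      mul_nonneg (by linarith [ht.2]) (by have := ht.1.le; positivity)

namespace MeasureTheory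

variable {α : Type*} [MeasurableSpace α] {μ : Measure α} {f : α → ℝ}

theorem lintegral_ofReal_pow_eq_lintegral_meas_le_mul (f_nn : 0 ≤ᵐ[μ] f)
    (f_mble : AEMeasurable f μ) (m : ℕ) :
    ∫⁻ ω, ENNReal.ofReal (f ω ^ (m + 1)) ∂μ =
      ∫⁻ t in Ioi 0, μ {ω | t ≤ f ω} * ENNReal.ofReal ((m + 1) * t ^ m) := by
  have hg : ∀ s : ℝ, ∫ t in (0:ℝ)..s, ((m:ℝ) + 1) * t ^ m = s ^ (m + 1) := by
    intro s; simp [integral_pow]; field_simp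
  simp_rw [← hg]
  exact lintegral_comp_eq_lintegral_meas_le_mul μ f_nn f_mble (fun t _ => by simp)
    (ae_restrict_of_forall_mem measurableSet_Ioi fun t (ht : 0 < t) => by positivity)

theorem integral_pow_succ_le_of_meas_le (f_nn : 0 ≤ᵐ[μ] f) (f_mble : AEMeasurable f μ) {c : ℝ}
    (hc : 0 ≤ c) (htail : ∀ t, μ {ω | t ≤ f ω} ≤ ENNReal.ofReal (c - t)) (m : ℕ) :
    ∫ ω, f ω ^ (m + 1) ∂μ ≤ c ^ (m + 2) / (m + 2) := by
  rw [integral_eq_lintegral_of_nonneg_ae (f_nn.mono fun ω h => pow_nonneg h _)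
    (f_mble.pow_const _).aestronglyMeasurable]
  refine ENNReal.toReal_le_of_le_ofReal (by positivity) ?_
  calc ∫⁻ ω, ENNReal.ofReal (f ω ^ (m + 1)) ∂μ
      = ∫⁻ t in Ioi 0, μ {ω | t ≤ f ω} * ENNReal.ofReal ((m + 1) * t ^ m) :=
        lintegral_ofReal_pow_eq_lintegral_meas_le_mul f_nn f_mble m
    _ ≤ ∫⁻ t in Ioi 0, ENNReal.ofReal (c - t) * ENNReal.ofReal ((m + 1) * t ^ m) :=
        lintegral_mono fun t => mul_le_mul_left (htail t) _
    _ = ENNReal.ofReal (c ^ (m + 2) / (m + 2)) := lintegral_Ioi_ofReal_sub_mul_pow m hc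

end MeasureTheory

theorem stmt1_general (W : StieltjesFunction ℝ)
    (hW0 : W 0 = 0) (n : ℕ) :
    ∀ x ∈ Set.Icc (0:ℝ) 1,
      ∫ ξ in Set.Ioc (0:ℝ) x, (Function.leftLim W ξ) ^ n ∂W.measure
        ≤ W x ^ (n + 1) / (n + 1 : ℝ) := by
  intro x hx
  have hWx : 0 ≤ W x := hW0 ▸ W.mono hx.1
  rcases n with _ | m
  · simp [measureReal_def, hW0, ENNReal.toReal_ofReal hWx]
  · push_cast
    refine (integral_pow_succ_le_of_meas_le ?_ W.mono.leftLim.measurable.aemeasurable hWx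
      (fun t => ?_) m).trans_eq (by ring)
    · exact ae_restrict_of_forall_mem measurableSet_Ioc fun ξ hξ =>
        show 0 ≤ leftLim W ξ from hW0 ▸ W.mono.le_leftLim hξ.1
    · rw [Measure.restrict_apply' measurableSet_Ioc]
      exact W.measure_le_leftLim_inter_Ioc_le t 0 x

/-- For `W` strictly increasing, right-continuous on `[0,1]` with `W 0 = 0`, and `n ≥ 0`,
`∫_{(0,x]} W(ξ⁻)ⁿ dW(ξ) ≤ W(x)^{n+1}/(n+1)` for all `x ∈ [0,1]`. -/
theorem stmt1 (W : StieltjesFunction ℝ) (hW : StrictMonoOn W (Set.Icc 0 1))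
    (hW0 : W 0 = 0) (n : ℕ) :
    ∀ x ∈ Set.Icc (0:ℝ) 1,
      ∫ ξ in Set.Ioc (0:ℝ) x, (Function.leftLim W ξ) ^ n ∂W.measure
        ≤ W x ^ (n + 1) / (n + 1 : ℝ) :=
  stmt1_general W hW0 n
end

section
/- Let W be strictly increasing right-continuous and V strictly increasing left-continuous on [0,1], with W(0)=V(0)=0. Define F₂(x,x) = ∫_{(0,x]} V(s) dW(s), and recursively p₀(x)=1, p_{n+1}(x) = ∫_{(0,x]} ∫_{[0,s)} p_n(ξ) dV(ξ) dW(s), so that p_n(x) = F_{2n}(x,x). Then for all n ≥ 1 and x ∈ [0,1], F_{2n}(x,x) ≤ (V(x) W(x))ⁿ / (n!)². -/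
/-!
By induction `p_n(ξ) ≤ (V ξ · W ξ)ⁿ / (n!)²`; bounding `W ξ ≤ W(s⁻)` for `ξ < s`, the induction step
reduces to the two power rules `∫_{[0,s)} Vⁿ dV ≤ V(s)ⁿ⁺¹/(n+1)` and
`∫_{(0,x]} W(s⁻)ⁿ dW ≤ W(x)ⁿ⁺¹/(n+1)`. Both hold because each integrand `f` has tails
`μ{f > t} ≤ (c - t)⁺`, i.e. it is stochastically dominated by the uniform distribution on `[0, c]`,
whose `n`-th moment is `cⁿ⁺¹/(n+1)`; the comparison of moments is the layer-cake formula.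
-/

open MeasureTheory Set Filter Function

/-- `f` is stochastically dominated under `μ` by the identity under Lebesgue measure on `(0, c]`. -/
structure DominatedByUniform {α : Type*} [MeasurableSpace α] (μ : Measure α) (f : α → ℝ) (c : ℝ) :
    Prop where
  aemeasurable : AEMeasurable f μ
  nonneg : 0 ≤ᵐ[μ] f
  measure_univ_le : μ univ ≤ ENNReal.ofReal c
  measure_lt_le : ∀ t > 0, μ {a | t < f a} ≤ ENNReal.ofReal (c - t)

namespace DominatedByUniform

variable {α : Type*} [MeasurableSpace α] {μ : Measure α} {f : α → ℝ} {c : ℝ}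

theorem lintegral_pow_le (h : DominatedByUniform μ f c) (n : ℕ) :
    ∫⁻ a, ENNReal.ofReal (f a ^ (n + 1)) ∂μ ≤ ∫⁻ u in Ioc 0 c, ENNReal.ofReal (u ^ (n + 1)) := by
  set g : ℝ → ℝ := fun t => (n + 1) * t ^ n
  have hg : ∀ y, ∫ t in 0..y, g t = y ^ (n + 1) := fun y => by
    simp only [g, intervalIntegral.integral_const_mul, integral_pow, zero_pow n.succ_ne_zero, sub_zero]
    field_simp
  have hg_int : ∀ t > 0, IntervalIntegrable g volume 0 t := fun t _ =>
    (by fun_prop : Continuous g).intervalIntegrable 0 t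
  have hg0 : ∀ᵐ t ∂volume.restrict (Ioi 0), 0 ≤ g t :=
    (ae_restrict_iff' measurableSet_Ioi).2 (Eventually.of_forall fun t (ht : 0 < t) => by positivity)
  -- both sides are layer-cake integrals against `g`, so it suffices to compare the tails
  have hcake_f := lintegral_comp_eq_lintegral_meas_lt_mul μ h.nonneg h.aemeasurable hg_int hg0
  have hcake_id := lintegral_comp_eq_lintegral_meas_lt_mul (volume.restrict (Ioc 0 c))
    ((ae_restrict_iff' measurableSet_Ioc).2 (Eventually.of_forall fun u hu => hu.1.le))
    aemeasurable_id hg_int hg0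
  simp only [hg] at hcake_f hcake_id
  rw [hcake_f, hcake_id]
  refine setLIntegral_mono' measurableSet_Ioi fun t (ht : 0 < t) => mul_le_mul_left ?_ _
  calc μ {a | t < f a} ≤ ENNReal.ofReal (c - t) := h.measure_lt_le t ht
    _ = volume (Ioc t c) := Real.volume_Ioc.symm
    _ ≤ volume.restrict (Ioc 0 c) {u | t < u} := by
      rw [Measure.restrict_apply' measurableSet_Ioc]
      exact measure_mono fun u hu => ⟨hu.1, ht.trans hu.1, hu.2⟩

theorem integrable_pow (h : DominatedByUniform μ f c) (n : ℕ) :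
    Integrable (fun a => f a ^ n) μ := by
  cases n with
  | zero =>
    have : IsFiniteMeasure μ := ⟨h.measure_univ_le.trans_lt ENNReal.ofReal_lt_top⟩
    simp
  | succ n =>
    have hpow_nonneg : 0 ≤ᵐ[μ] fun a => f a ^ (n + 1) :=
      h.nonneg.mono fun a ha => pow_nonneg ha _
    refine ⟨(h.aemeasurable.pow_const _).aestronglyMeasurable,
      (hasFiniteIntegral_iff_ofReal hpow_nonneg).2 ((h.lintegral_pow_le n).trans_lt ?_)⟩
    exact (continuous_pow _).integrableOn_Ioc.lintegral_lt_top

theorem integral_pow_le (h : DominatedByUniform μ f c) (hc : 0 ≤ c) (n : ℕ) :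
    ∫ a, f a ^ n ∂μ ≤ c ^ (n + 1) / (n + 1) := by
  cases n with
  | zero => simpa [measureReal_def] using ENNReal.toReal_le_of_le_ofReal hc h.measure_univ_le
  | succ n =>
    have hpow_int : IntegrableOn (fun u : ℝ => u ^ (n + 1)) (Ioc 0 c) :=
      (continuous_pow _).integrableOn_Ioc
    calc ∫ a, f a ^ (n + 1) ∂μ = (∫⁻ a, ENNReal.ofReal (f a ^ (n + 1)) ∂μ).toReal :=
          integral_eq_lintegral_of_nonneg_ae (h.nonneg.mono fun a ha => pow_nonneg ha _)
            (h.aemeasurable.pow_const _).aestronglyMeasurable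
      _ ≤ (∫⁻ u in Ioc 0 c, ENNReal.ofReal (u ^ (n + 1))).toReal :=
          ENNReal.toReal_mono hpow_int.lintegral_lt_top.ne (h.lintegral_pow_le n)
      _ = ∫ u in Ioc 0 c, u ^ (n + 1) :=
          (integral_eq_lintegral_of_nonneg_ae ((ae_restrict_iff' measurableSet_Ioc).2
            (Eventually.of_forall fun u hu => pow_nonneg hu.1.le _))
            hpow_int.aestronglyMeasurable).symm
      _ = c ^ (n + 1 + 1) / (↑(n + 1) + 1) := by
          rw [← intervalIntegral.integral_of_le hc, integral_pow]; simp

end DominatedByUniform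

theorem measure_le_of_forall_measure_inter_Ici_le {α : Type*} [ConditionallyCompleteLinearOrder α]
    [TopologicalSpace α] [OrderTopology α] [FirstCountableTopology α] [MeasurableSpace α]
    {μ : Measure α} {A : Set α} {C : ENNReal} (hA : BddBelow A)
    (h : ∀ a ∈ A, μ (A ∩ Ici a) ≤ C) : μ A ≤ C := by
  rcases A.eq_empty_or_nonempty with rfl | hne
  · simp
  by_cases hmin : sInf A ∈ A
  · have hA_eq : A ∩ Ici (sInf A) = A := inter_eq_left.2 fun a ha => csInf_le hA ha
    exact hA_eq ▸ h _ hmin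
  obtain ⟨u, hu_anti, hu_lim, hu_mem⟩ := exists_seq_tendsto_sInf hne hA
  have hcover : A ⊆ ⋃ n, A ∩ Ici (u n) := fun a ha => by
    have hlt : sInf A < a := (csInf_le hA ha).lt_of_ne fun h => hmin (h ▸ ha)
    obtain ⟨n, hn⟩ := (hu_lim.eventually (gt_mem_nhds hlt)).exists
    exact mem_iUnion.2 ⟨n, ha, hn.le⟩
  calc μ A ≤ μ (⋃ n, A ∩ Ici (u n)) := measure_mono hcover
    _ = ⨆ n, μ (A ∩ Ici (u n)) :=
      Monotone.measure_iUnion fun m n hmn => inter_subset_inter_right _ (Ici_subset_Ici.2 (hu_anti hmn))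
    _ ≤ C := iSup_le fun n => h _ (hu_mem n)

theorem StieltjesFunction.dominatedByUniform_leftLim_sub (F : StieltjesFunction ℝ) (a b : ℝ) :
    DominatedByUniform (F.measure.restrict (Ioc a b)) (fun σ => leftLim F σ - F a) (F b - F a) where
  aemeasurable := (F.mono.leftLim.measurable.sub_const _).aemeasurable
  nonneg := (ae_restrict_iff' measurableSet_Ioc).2 (Eventually.of_forall fun σ hσ =>
    sub_nonneg.2 (F.mono.le_leftLim hσ.1))
  measure_univ_le := by rw [Measure.restrict_apply_univ, F.measure_Ioc]
  measure_lt_le t _ := by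
    rw [Measure.restrict_apply' measurableSet_Ioc]
    refine measure_le_of_forall_measure_inter_Ici_le ⟨a, fun σ hσ => hσ.2.1.le⟩ ?_
    rintro σ ⟨hσt : t < leftLim F σ - F a, hσ⟩
    calc F.measure (({σ | t < leftLim F σ - F a} ∩ Ioc a b) ∩ Ici σ)
        ≤ F.measure (Icc σ b) := measure_mono fun τ hτ => ⟨hτ.2, hτ.1.2.2⟩
      _ = ENNReal.ofReal (F b - leftLim F σ) := F.measure_Icc σ b
      _ ≤ ENNReal.ofReal (F b - F a - t) :=
        ENNReal.ofReal_le_ofReal (by linarith)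

theorem dominatedByUniform_sub_of_measure_Ico {μ : Measure ℝ} {V : ℝ → ℝ} {a b : ℝ} (hab : a ≤ b)
    (hV : MonotoneOn V (Icc a b)) (hμ : ∀ c ∈ Icc a b, μ (Ico c b) = ENNReal.ofReal (V b - V c)) :
    DominatedByUniform (μ.restrict (Ico a b)) (fun ξ => V ξ - V a) (V b - V a) where
  aemeasurable :=
    (aemeasurable_restrict_of_monotoneOn measurableSet_Ico (hV.mono Ico_subset_Icc_self)).sub_const _
  nonneg := (ae_restrict_iff' measurableSet_Ico).2 (Eventually.of_forall fun ξ hξ =>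
    sub_nonneg.2 (hV (left_mem_Icc.2 hab) (Ico_subset_Icc_self hξ) hξ.1))
  measure_univ_le := by rw [Measure.restrict_apply_univ, hμ a (left_mem_Icc.2 hab)]
  measure_lt_le t _ := by
    rw [Measure.restrict_apply' measurableSet_Ico]
    refine measure_le_of_forall_measure_inter_Ici_le ⟨a, fun ξ hξ => hξ.2.1⟩ ?_
    rintro ξ ⟨hξt : t < V ξ - V a, hξ⟩
    calc μ (({ξ | t < V ξ - V a} ∩ Ico a b) ∩ Ici ξ)
        ≤ μ (Ico ξ b) := measure_mono fun ζ hζ => ⟨hζ.2, hζ.1.2.2⟩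
      _ = ENNReal.ofReal (V b - V ξ) := hμ ξ (Ico_subset_Icc_self hξ)
      _ ≤ ENNReal.ofReal (V b - V a - t) :=
        ENNReal.ofReal_le_ofReal (by linarith)

theorem setIntegral_Ico_le_leftLim_pow (W : StieltjesFunction ℝ) (V : ℝ → ℝ) (μV : Measure ℝ)
    (hW0 : W 0 = 0) (hV : MonotoneOn V (Icc 0 1)) (hV0 : V 0 = 0)
    (hμV : ∀ a b : ℝ, 0 ≤ a → a ≤ b → b ≤ 1 → μV (Ico a b) = ENNReal.ofReal (V b - V a))
    {q : ℝ → ℝ} (hq0 : ∀ ξ, 0 ≤ q ξ) {n : ℕ}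
    (hq : ∀ ξ ∈ Icc (0 : ℝ) 1, q ξ ≤ (V ξ * W ξ) ^ n / (n.factorial : ℝ) ^ 2)
    {s : ℝ} (hs : s ∈ Ioc (0 : ℝ) 1) :
    ∫ ξ in Ico 0 s, q ξ ∂μV
      ≤ V s ^ (n + 1) / ((n + 1) * (n.factorial : ℝ) ^ 2) * leftLim W s ^ n := by
  have hV_nonneg : ∀ ξ ∈ Icc (0 : ℝ) 1, 0 ≤ V ξ := fun ξ hξ =>
    hV0 ▸ hV (left_mem_Icc.2 zero_le_one) hξ hξ.1
  have hleftLim_nonneg : 0 ≤ leftLim W s := hW0 ▸ W.mono.le_leftLim hs.1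
  have hV_dom := dominatedByUniform_sub_of_measure_Ico hs.1.le (hV.mono (Icc_subset_Icc_right hs.2))
    fun c hc => hμV c s hc.1 hc.2 hs.2
  simp only [hV0, sub_zero] at hV_dom
  have hpointwise : ∀ ξ ∈ Ico 0 s, q ξ ≤ leftLim W s ^ n / (n.factorial : ℝ) ^ 2 * V ξ ^ n := by
    intro ξ hξ
    have hξ1 : ξ ∈ Icc (0 : ℝ) 1 := ⟨hξ.1, hξ.2.le.trans hs.2⟩
    calc q ξ ≤ (V ξ * W ξ) ^ n / (n.factorial : ℝ) ^ 2 := hq ξ hξ1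
      _ ≤ (V ξ * leftLim W s) ^ n / (n.factorial : ℝ) ^ 2 := by
        gcongr
        · exact mul_nonneg (hV_nonneg ξ hξ1) (hW0 ▸ W.mono hξ.1)
        · exact hV_nonneg ξ hξ1
        · exact W.mono.le_leftLim hξ.2
      _ = _ := by ring
  calc ∫ ξ in Ico 0 s, q ξ ∂μV
      ≤ ∫ ξ in Ico 0 s, leftLim W s ^ n / (n.factorial : ℝ) ^ 2 * V ξ ^ n ∂μV :=
        integral_mono_of_nonneg (Eventually.of_forall hq0)
          ((hV_dom.integrable_pow n).const_mul _)
          ((ae_restrict_iff' measurableSet_Ico).2 (Eventually.of_forall hpointwise))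
    _ = leftLim W s ^ n / (n.factorial : ℝ) ^ 2 * ∫ ξ in Ico 0 s, V ξ ^ n ∂μV :=
        integral_const_mul _ _
    _ ≤ leftLim W s ^ n / (n.factorial : ℝ) ^ 2 * (V s ^ (n + 1) / (n + 1)) := by
        gcongr
        exact hV_dom.integral_pow_le (hV_nonneg s ⟨hs.1.le, hs.2⟩) n
    _ = V s ^ (n + 1) / ((n + 1) * (n.factorial : ℝ) ^ 2) * leftLim W s ^ n := by
        field_simp

theorem setIntegral_Ioc_setIntegral_Ico_le (W : StieltjesFunction ℝ) (V : ℝ → ℝ) (μV : Measure ℝ)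
    (hW0 : W 0 = 0) (hV : MonotoneOn V (Icc 0 1)) (hV0 : V 0 = 0)
    (hμV : ∀ a b : ℝ, 0 ≤ a → a ≤ b → b ≤ 1 → μV (Ico a b) = ENNReal.ofReal (V b - V a))
    {q : ℝ → ℝ} (hq0 : ∀ ξ, 0 ≤ q ξ) {n : ℕ}
    (hq : ∀ ξ ∈ Icc (0 : ℝ) 1, q ξ ≤ (V ξ * W ξ) ^ n / (n.factorial : ℝ) ^ 2)
    {x : ℝ} (hx : x ∈ Icc (0 : ℝ) 1) :
    ∫ s in Ioc 0 x, (∫ ξ in Ico 0 s, q ξ ∂μV) ∂W.measure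
      ≤ (V x * W x) ^ (n + 1) / ((n + 1).factorial : ℝ) ^ 2 := by
  have hV_nonneg : ∀ ξ ∈ Icc (0 : ℝ) 1, 0 ≤ V ξ := fun ξ hξ =>
    hV0 ▸ hV (left_mem_Icc.2 zero_le_one) hξ hξ.1
  set K := V x ^ (n + 1) / ((n + 1) * (n.factorial : ℝ) ^ 2)
  have hK : 0 ≤ K := by have := hV_nonneg x hx; positivity
  have hW_dom := W.dominatedByUniform_leftLim_sub 0 x
  simp only [hW0, sub_zero] at hW_dom
  have hinner : ∀ s ∈ Ioc 0 x, ∫ ξ in Ico 0 s, q ξ ∂μV ≤ K * leftLim W s ^ n := by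
    intro s hs
    have hs' : s ∈ Ioc (0 : ℝ) 1 := ⟨hs.1, hs.2.trans hx.2⟩
    refine (setIntegral_Ico_le_leftLim_pow W V μV hW0 hV hV0 hμV hq0 hq hs').trans ?_
    have := hW0 ▸ W.mono.le_leftLim hs.1
    have := hV_nonneg s (Ioc_subset_Icc_self hs')
    simp only [K]
    gcongr
    exact hV (Ioc_subset_Icc_self hs') hx hs.2
  calc ∫ s in Ioc 0 x, (∫ ξ in Ico 0 s, q ξ ∂μV) ∂W.measure
      ≤ ∫ s in Ioc 0 x, K * leftLim W s ^ n ∂W.measure :=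
        integral_mono_of_nonneg
          (Eventually.of_forall fun s => integral_nonneg fun ξ => hq0 ξ)
          ((hW_dom.integrable_pow n).const_mul _)
          ((ae_restrict_iff' measurableSet_Ioc).2 (Eventually.of_forall hinner))
    _ = K * ∫ s in Ioc 0 x, leftLim W s ^ n ∂W.measure := integral_const_mul _ _
    _ ≤ K * (W x ^ (n + 1) / (n + 1)) := by
        gcongr
        exact hW_dom.integral_pow_le (hW0 ▸ W.mono hx.1) n
    _ = (V x * W x) ^ (n + 1) / ((n + 1).factorial : ℝ) ^ 2 := by
        rw [Nat.factorial_succ]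
        push_cast [K]
        field_simp
        ring

theorem stmt3_general (W : StieltjesFunction ℝ) (V : ℝ → ℝ) (μV : Measure ℝ)
    (hW0 : W 0 = 0)
    (hV : StrictMonoOn V (Set.Icc 0 1)) (hV0 : V 0 = 0)
    (hμV : ∀ a b : ℝ, 0 ≤ a → a ≤ b → b ≤ 1 →
      μV (Set.Ico a b) = ENNReal.ofReal (V b - V a))
    (p : ℕ → ℝ → ℝ)
    (hp0 : ∀ x, p 0 x = 1)
    (hp : ∀ (n : ℕ) (x : ℝ), p (n + 1) x =
      ∫ s in Set.Ioc (0:ℝ) x, (∫ ξ in Set.Ico (0:ℝ) s, p n ξ ∂μV) ∂W.measure) :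
    ∀ n : ℕ, 1 ≤ n → ∀ x ∈ Set.Icc (0:ℝ) 1,
      p n x ≤ (V x * W x) ^ n / ((n.factorial : ℝ)) ^ 2 := by
  have hp_nonneg : ∀ n x, 0 ≤ p n x := by
    intro n
    induction n with
    | zero => simp [hp0]
    | succ n ih => exact fun x => hp n x ▸ integral_nonneg fun s => integral_nonneg fun ξ => ih ξ
  have hp_le : ∀ n, ∀ x ∈ Icc (0 : ℝ) 1, p n x ≤ (V x * W x) ^ n / (n.factorial : ℝ) ^ 2 := by
    intro n
    induction n with
    | zero => simp [hp0]
    | succ n ih =>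
      intro x hx
      rw [hp]
      exact setIntegral_Ioc_setIntegral_Ico_le W V μV hW0 hV.monotoneOn hV0 hμV (hp_nonneg n) ih hx
  exact fun n _ => hp_le n

/-- With `W` strictly increasing càdlàg, `V` strictly increasing càglàd on `[0,1]`,
`W(0)=V(0)=0`, and the iterated integrals `p₀ = 1`,
`p_{n+1}(x) = ∫_{(0,x]} ∫_{[0,s)} p_n(ξ) dV(ξ) dW(s)` (so `p_n(x) = F_{2n}(x,x)`), we have
`F_{2n}(x,x) ≤ (V(x)W(x))ⁿ/(n!)²` for all `n ≥ 1` and `x ∈ [0,1]`. -/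
theorem stmt3 (W : StieltjesFunction ℝ) (V : ℝ → ℝ) (μV : Measure ℝ) [IsFiniteMeasure μV]
    (hW : StrictMonoOn W (Set.Icc 0 1)) (hW0 : W 0 = 0)
    (hV : StrictMonoOn V (Set.Icc 0 1)) (hV0 : V 0 = 0)
    (hVleft : ∀ x ∈ Set.Ioc (0:ℝ) 1, ContinuousWithinAt V (Set.Iic x) x)
    (hμV : ∀ a b : ℝ, 0 ≤ a → a ≤ b → b ≤ 1 →
      μV (Set.Ico a b) = ENNReal.ofReal (V b - V a))
    (p : ℕ → ℝ → ℝ)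
    (hp0 : ∀ x, p 0 x = 1)
    (hp : ∀ (n : ℕ) (x : ℝ), p (n + 1) x =
      ∫ s in Set.Ioc (0:ℝ) x, (∫ ξ in Set.Ico (0:ℝ) s, p n ξ ∂μV) ∂W.measure) :
    ∀ n : ℕ, 1 ≤ n → ∀ x ∈ Set.Icc (0:ℝ) 1,
      p n x ≤ (V x * W x) ^ n / ((n.factorial : ℝ)) ^ 2 :=
  stmt3_general W V μV hW0 hV hV0 hμV p hp0 hp
end

section
/- Let W be strictly increasing, right-continuous on [0,1] with W(0)=0, and let c ≥ W(x) for some fixed x ∈ [0,1]. Then for all s ∈ [0,x) and all n ≥ 0, ∫_{[s,x)} (c − W(ξ⁺))ⁿ dW_*(ξ) ≤ (c − W(s))^{n+1}/(n+1), where W(ξ⁺) denotes the right limit and dW_* is the measure induced by the increasing function W. (Stated for the measure with half-open intervals [a,b).) -/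
/-!
On `[s, x)` right-continuity gives `W(ξ⁺) = W ξ`. The function `f = c - W` is then
stochastically dominated, under `μ` restricted to `[s, x)`, by the identity under Lebesgue
measure on `(0, c - W s]`: `μ {ξ ∈ [s, x) | t < f ξ} ≤ c - W s - t`. Indeed
`{ξ ∈ [s, x) | W ξ < u}` is exhausted from inside by compact sets, and by right-continuity at
its maximum each of them lies in some `[s, k')` with `W k' < u`. The layer-cake formula turns
this domination into `∫ fⁿ ≤ ∫₀^{c - W s} yⁿ dy = (c - W s)^{n+1} / (n + 1)`.
-/
open MeasureTheory Set

theorem lintegral_comp_le_of_meas_lt_le {α β : Type*} [MeasurableSpace α] [MeasurableSpace β]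
    {ν : Measure α} {ρ : Measure β} {f : α → ℝ} {h : β → ℝ} {g : ℝ → ℝ}
    (hf0 : 0 ≤ᵐ[ν] f) (hf : AEMeasurable f ν) (hh0 : 0 ≤ᵐ[ρ] h) (hh : AEMeasurable h ρ)
    (g_intble : ∀ t > 0, IntervalIntegrable g volume 0 t)
    (g_nn : ∀ᵐ t ∂volume.restrict (Ioi 0), 0 ≤ g t)
    (hdom : ∀ t > 0, ν {a | t < f a} ≤ ρ {b | t < h b}) :
    ∫⁻ a, ENNReal.ofReal (∫ t in 0..f a, g t) ∂ν
      ≤ ∫⁻ b, ENNReal.ofReal (∫ t in 0..h b, g t) ∂ρ := by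
  rw [lintegral_comp_eq_lintegral_meas_lt_mul ν hf0 hf g_intble g_nn,
    lintegral_comp_eq_lintegral_meas_lt_mul ρ hh0 hh g_intble g_nn]
  exact setLIntegral_mono' measurableSet_Ioi fun t ht => mul_le_mul_left (hdom t ht) _

theorem volume_Ioc_zero_setOf_lt {C t : ℝ} (ht : 0 < t) :
    volume.restrict (Ioc 0 C) {y | t < y} = ENNReal.ofReal (C - t) := by
  have : {y | t < y} ∩ Ioc 0 C = Ioc t C := by
    ext y
    simp only [mem_inter_iff, mem_Ioc]
    exact ⟨fun ⟨hty, _, hyC⟩ => ⟨hty, hyC⟩, fun ⟨hty, hyC⟩ => ⟨hty, ht.trans hty, hyC⟩⟩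
  rw [Measure.restrict_apply' measurableSet_Ioc, this, Real.volume_Ioc]

theorem lintegral_Ioc_zero_pow {C : ℝ} (hC : 0 ≤ C) (n : ℕ) :
    ∫⁻ y in Ioc 0 C, ENNReal.ofReal (y ^ n) = ENNReal.ofReal (C ^ (n + 1) / (n + 1)) := by
  rw [← ofReal_integral_eq_lintegral_ofReal (continuous_pow n).integrableOn_Ioc
    ((ae_restrict_iff' measurableSet_Ioc).2 (.of_forall fun y hy => pow_nonneg hy.1.le n)),
    ← intervalIntegral.integral_of_le hC, integral_pow]
  simp

theorem lintegral_pow_le_of_meas_lt_le {α : Type*} [MeasurableSpace α] {ν : Measure α}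
    {f : α → ℝ} (hf0 : 0 ≤ᵐ[ν] f) (hf : AEMeasurable f ν) {C : ℝ} (hC : 0 ≤ C)
    (hdom : ∀ t > 0, ν {a | t < f a} ≤ ENNReal.ofReal (C - t)) {n : ℕ} (hn : n ≠ 0) :
    ∫⁻ a, ENNReal.ofReal (f a ^ n) ∂ν ≤ ENNReal.ofReal (C ^ (n + 1) / (n + 1)) := by
  obtain ⟨m, rfl⟩ := Nat.exists_eq_succ_of_ne_zero hn
  have hprim : ∀ y : ℝ, ∫ t in 0..y, ((m : ℝ) + 1) * t ^ m = y ^ (m + 1) := fun y => by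
    rw [intervalIntegral.integral_const_mul, integral_pow]
    field_simp
    ring
  have hcomp := lintegral_comp_le_of_meas_lt_le (ρ := volume.restrict (Ioc 0 C)) (h := id)
    (g := fun t => ((m : ℝ) + 1) * t ^ m)
    hf0 hf ((ae_restrict_iff' measurableSet_Ioc).2 (.of_forall fun y hy => hy.1.le))
    aemeasurable_id (fun t _ => (by fun_prop : Continuous _).intervalIntegrable 0 t)
    ((ae_restrict_iff' measurableSet_Ioi).2 (.of_forall fun t (ht : 0 < t) => by positivity))
    (fun t ht => (hdom t ht).trans_eq (volume_Ioc_zero_setOf_lt ht).symm)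
  simp only [hprim, id] at hcomp
  exact hcomp.trans_eq (lintegral_Ioc_zero_pow hC _)

theorem measure_Ico_setOf_lt_le {W : ℝ → ℝ} {μ : Measure ℝ} [IsLocallyFiniteMeasure μ]
    {s x u : ℝ} (hW : MonotoneOn W (Ico s x))
    (hWr : ∀ y ∈ Ico s x, ContinuousWithinAt W (Ici y) y)
    (hμ : ∀ b ∈ Ioo s x, μ (Ico s b) = ENNReal.ofReal (W b - W s)) :
    μ {ξ ∈ Ico s x | W ξ < u} ≤ ENNReal.ofReal (u - W s) := by
  set A := {ξ ∈ Ico s x | W ξ < u}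
  have hA : MeasurableSet A := by
    refine OrdConnected.measurableSet ⟨fun a ha b hb ξ hξ => ?_⟩
    have hξ' : ξ ∈ Ico s x := ⟨ha.1.1.trans hξ.1, hξ.2.trans_lt hb.1.2⟩
    exact ⟨hξ', (hW hξ' hb.1 hξ.2).trans_lt hb.2⟩
  have hAfin : μ A ≠ ⊤ :=
    ((measure_mono fun ξ hξ => Ico_subset_Icc_self hξ.1).trans_lt isCompact_Icc.measure_lt_top).ne
  refine le_of_forall_lt fun r hr => ?_
  obtain ⟨K, hKA, hK, hrK⟩ := hA.exists_lt_isCompact_of_ne_top hAfin hr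
  obtain rfl | hKne := K.eq_empty_or_nonempty
  · simp at hrK
  obtain ⟨⟨hsk, hkx⟩, hWk⟩ := hKA (hK.sSup_mem hKne)
  obtain ⟨k', ⟨hWk', hk'x⟩, hkk'⟩ :=
    ((((hWr _ ⟨hsk, hkx⟩).mono Ioi_subset_Ici_self).eventually (Iio_mem_nhds hWk)).and
      (mem_nhdsWithin_of_mem_nhds (Iio_mem_nhds hkx)) |>.and self_mem_nhdsWithin).exists
  have hKk' : K ⊆ Ico s k' := fun ξ hξ =>
    ⟨(hKA hξ).1.1, (le_csSup hK.bddAbove hξ).trans_lt hkk'⟩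
  calc r < μ K := hrK
    _ ≤ μ (Ico s k') := measure_mono hKk'
    _ = ENNReal.ofReal (W k' - W s) := hμ k' ⟨hsk.trans_lt hkk', hk'x⟩
    _ ≤ ENNReal.ofReal (u - W s) := ENNReal.ofReal_le_ofReal (by linarith)

theorem setIntegral_Ico_sub_pow_le {W : ℝ → ℝ} {μ : Measure ℝ} [IsLocallyFiniteMeasure μ]
    {s x c : ℝ} (hsx : s ≤ x) (hW : MonotoneOn W (Icc s x))
    (hWr : ∀ y ∈ Ico s x, ContinuousWithinAt W (Ici y) y)
    (hμ : ∀ b ∈ Ioc s x, μ (Ico s b) = ENNReal.ofReal (W b - W s)) (hc : W x ≤ c) (n : ℕ) :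
    ∫ ξ in Ico s x, (c - W ξ) ^ n ∂μ ≤ (c - W s) ^ (n + 1) / (n + 1 : ℝ) := by
  have hWx : ∀ ξ ∈ Icc s x, W ξ ≤ W x := fun ξ hξ => hW hξ (right_mem_Icc.2 hsx) hξ.2
  have hC : 0 ≤ c - W s := by linarith [hWx s (left_mem_Icc.2 hsx)]
  obtain rfl | hn := eq_or_ne n 0
  · rcases hsx.eq_or_lt with rfl | hsx
    · simp [hC]
    simp [measureReal_def, hμ x ⟨hsx, le_rfl⟩, hWx s (left_mem_Icc.2 hsx.le), hc]
  have hf0 : 0 ≤ᵐ[μ.restrict (Ico s x)] fun ξ => c - W ξ :=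
    (ae_restrict_iff' measurableSet_Ico).2
      (.of_forall fun ξ hξ => sub_nonneg.2 ((hWx ξ (Ico_subset_Icc_self hξ)).trans hc))
  have hf : AEMeasurable (fun ξ => c - W ξ) (μ.restrict (Ico s x)) :=
    (aemeasurable_restrict_of_monotoneOn measurableSet_Ico (hW.mono Ico_subset_Icc_self)).const_sub c
  have hdom : ∀ t > 0, μ.restrict (Ico s x) {ξ | t < c - W ξ} ≤ ENNReal.ofReal (c - W s - t) := by
    intro t _
    rw [Measure.restrict_apply' measurableSet_Ico]
    calc μ ({ξ | t < c - W ξ} ∩ Ico s x) ≤ μ {ξ ∈ Ico s x | W ξ < c - t} :=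
          measure_mono fun ξ ⟨hξt, hξ⟩ => ⟨hξ, by simp only [mem_ofPred_eq] at hξt; linarith⟩
      _ ≤ ENNReal.ofReal (c - t - W s) := measure_Ico_setOf_lt_le
          (hW.mono Ico_subset_Icc_self) hWr fun b hb => hμ b (Ioo_subset_Ioc_self hb)
      _ = ENNReal.ofReal (c - W s - t) := by ring_nf
  rw [integral_eq_lintegral_of_nonneg_ae (hf0.mono fun ξ hξ => pow_nonneg hξ n)
    (hf.pow_const n).aestronglyMeasurable]
  exact ENNReal.toReal_le_of_le_ofReal (by positivity)
    (lintegral_pow_le_of_meas_lt_le hf0 hf hC hdom hn)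

theorem stmt5_general (W : ℝ → ℝ) (μ : Measure ℝ) [IsFiniteMeasure μ]
    (hW : StrictMonoOn W (Set.Icc 0 1))
    (hWright : ∀ y ∈ Set.Ico (0:ℝ) 1, ContinuousWithinAt W (Set.Ici y) y)
    (hμ : ∀ a b : ℝ, 0 ≤ a → a ≤ b → b ≤ 1 →
      μ (Set.Ico a b) = ENNReal.ofReal (W b - W a))
    (x c : ℝ) (hx : x ∈ Set.Icc (0:ℝ) 1) (hc : W x ≤ c) :
    ∀ s ∈ Set.Ico (0:ℝ) x, ∀ n : ℕ,
      ∫ ξ in Set.Ico s x, (c - Function.rightLim W ξ) ^ n ∂μ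
        ≤ (c - W s) ^ (n + 1) / (n + 1 : ℝ) := by
  rintro s ⟨hs0, hsx⟩ n
  have hsub : Ico s x ⊆ Ico 0 1 := Ico_subset_Ico hs0 hx.2
  have hrightLim : EqOn (fun ξ => (c - Function.rightLim W ξ) ^ n) (fun ξ => (c - W ξ) ^ n)
      (Ico s x) := fun ξ hξ => by
    simp only [rightLim_eq_of_tendsto ((hWright ξ (hsub hξ)).mono Ioi_subset_Ici_self).tendsto]
  rw [setIntegral_congr_fun measurableSet_Ico hrightLim]
  exact setIntegral_Ico_sub_pow_le hsx.le (hW.monotoneOn.mono (Icc_subset_Icc hs0 hx.2))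
    (fun y hy => hWright y (hsub hy)) (fun b hb => hμ s b hs0 hb.1.le (hb.2.trans hx.2)) hc n

/-- For `W` strictly increasing on `[0,1]` with `W 0 = 0`, `μ` the induced measure on
half-open intervals (`μ([a,b)) = W(b) − W(a)`), and a constant `c ≥ W(x)`, for all
`s ∈ [0,x)` and `n ≥ 0`:
`∫_{[s,x)} (c − W(ξ⁺))ⁿ dμ(ξ) ≤ (c − W(s))^{n+1}/(n+1)`. -/
theorem stmt5 (W : ℝ → ℝ) (μ : Measure ℝ) [IsFiniteMeasure μ]
    (hW : StrictMonoOn W (Set.Icc 0 1)) (hW0 : W 0 = 0)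
    (hWright : ∀ y ∈ Set.Ico (0:ℝ) 1, ContinuousWithinAt W (Set.Ici y) y)
    (hμ : ∀ a b : ℝ, 0 ≤ a → a ≤ b → b ≤ 1 →
      μ (Set.Ico a b) = ENNReal.ofReal (W b - W a))
    (x c : ℝ) (hx : x ∈ Set.Icc (0:ℝ) 1) (hc : W x ≤ c) :
    ∀ s ∈ Set.Ico (0:ℝ) x, ∀ n : ℕ,
      ∫ ξ in Set.Ico s x, (c - Function.rightLim W ξ) ^ n ∂μ
        ≤ (c - W s) ^ (n + 1) / (n + 1 : ℝ) :=
  stmt5_general W μ hW hWright hμ x c hx hc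
end

section
/- Let α_n(x) = (p_n(x), q_n(x)) where for k ≥ 0, α_{2k}(x) = (G_{2k}(x,x), F_{2k}(x,x)) and α_{2k+1}(x) = (F_{2k+1}(x,x), G_{2k+1}(x,x)), with F_n and G_n the alternating iterated Stieltjes integrals associated to a strictly increasing càdlàg W and strictly increasing càglàd V on [0,1] (F₀=G₀=1, F₁(x,x)=W(x), G₁(x,x)=V(x)). Then for every n ≥ 1 and every x, Σ_{j=0}^{2n} (−1)^j q_j(x) p_{2n−j}(x) = 0. -/
/-!
Pairing `j` with `2n - j`, the sum is `∑_{i+j=2n} (-1)^i F_i(x) G_j(x)`. Write `A f` for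
`∫_{(0,x]} f dW` and `B f` for `∫_{[0,x)} f dμV`. Splitting the square `(0,x] × [0,x)` along
the diagonal (Fubini) gives the integration by parts formula
`F_{i+1}(x) G_{j+1}(x) = A (G_i G_{j+1}) + B (F_{i+1} F_j)`, a discrete Leibniz rule.
Summed with alternating signs over `i + j = 2n`, it telescopes to
`∑_{i+j=2n-1} (-1)^i (B (F_i F_j) - A (G_i G_j))`, and each of these two sums vanishes because
its terms are symmetric in `(i, j)` while `(-1)^i = -(-1)^j` when `i + j` is odd.
-/

open MeasureTheory Set Finset

theorem sum_antidiagonal_neg_one_pow_mul_eq_zero {N : ℕ} (hN : Odd N) {c : ℕ → ℕ → ℝ}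
    (hc : ∀ i j, c i j = c j i) :
    ∑ p ∈ antidiagonal N, (-1 : ℝ) ^ p.1 * c p.1 p.2 = 0 := by
  have hswap : ∀ p ∈ (antidiagonal N : Finset (ℕ × ℕ)),
      (-1 : ℝ) ^ p.swap.1 * c p.swap.1 p.swap.2 = -((-1) ^ p.1 * c p.1 p.2) := by
    rintro ⟨i, j⟩ hp
    rw [HasAntidiagonal.mem_antidiagonal] at hp
    subst hp
    have hodd : (-1 : ℝ) ^ i * (-1) ^ j = -1 := by rw [← pow_add, hN.neg_one_pow]
    have hsq : ((-1 : ℝ) ^ i) ^ 2 = 1 := by rw [← pow_mul, pow_mul', neg_one_sq, one_pow]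
    rw [Prod.fst_swap, Prod.snd_swap, hc j i]
    linear_combination c i j * (-1) ^ i * hodd - c i j * (-1) ^ j * hsq
  have hsum := Nat.sum_antidiagonal_swap (f := fun p => (-1 : ℝ) ^ p.1 * c p.1 p.2) (n := N)
  rw [sum_congr rfl hswap, sum_neg_distrib] at hsum
  linarith

/-- Discrete Leibniz rule: `w` and `v` are the contributions of the two factors. -/
theorem sum_antidiagonal_succ_neg_one_pow_mul {N : ℕ} {P w v : ℕ → ℕ → ℝ}
    (hP : ∀ i j, P (i + 1) (j + 1) = w i (j + 1) + v (i + 1) j)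
    (hP_left : ∀ j, P 0 (j + 1) = v 0 j) (hP_right : ∀ i, P (i + 1) 0 = w i 0) :
    ∑ p ∈ antidiagonal (N + 1), (-1 : ℝ) ^ p.1 * P p.1 p.2 =
      ∑ p ∈ antidiagonal N, (-1 : ℝ) ^ p.1 * (v p.1 p.2 - w p.1 p.2) := by
  have hsplit : ∀ p ∈ (antidiagonal (N + 1) : Finset (ℕ × ℕ)), (-1 : ℝ) ^ p.1 * P p.1 p.2 =
      (-1) ^ p.1 * (if p.1 = 0 then 0 else w (p.1 - 1) p.2) +
        (-1) ^ p.1 * (if p.2 = 0 then 0 else v p.1 (p.2 - 1)) := by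
    rintro ⟨_ | i, _ | j⟩ hp
    · simp at hp
    · simp [hP_left]
    · simp [hP_right]
    · simp [hP, mul_add]
  rw [sum_congr rfl hsplit, sum_add_distrib, Nat.sum_antidiagonal_succ,
    Nat.sum_antidiagonal_succ']
  simp only [if_true, Nat.add_one_ne_zero, if_false, Nat.add_sub_cancel, mul_zero, zero_add]
  rw [← sum_add_distrib]
  exact sum_congr rfl fun p _ => by ring

/-- When `i + j` is even, `i` and `j` have the same parity, so the terms at `(i, j)` and `(j, i)`
together agree with those of the plain alternating sum. -/
theorem sum_range_parity_eq_sum_antidiagonal (n : ℕ) (a b : ℕ → ℝ) :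
    ∑ j ∈ range (2 * n + 1), (-1 : ℝ) ^ j * (if Even j then a j else b j) *
        (if Even (2 * n - j) then b (2 * n - j) else a (2 * n - j)) =
      ∑ p ∈ antidiagonal (2 * n), (-1 : ℝ) ^ p.1 * (a p.1 * b p.2) := by
  set T : ℕ × ℕ → ℝ := fun p =>
    (-1) ^ p.1 * (if Even p.1 then a p.1 else b p.1) * (if Even p.2 then b p.2 else a p.2)
  set S : ℕ × ℕ → ℝ := fun p => (-1) ^ p.1 * (a p.1 * b p.2)
  have hpair : ∀ p ∈ (antidiagonal (2 * n) : Finset (ℕ × ℕ)),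
      T p + T p.swap = S p + S p.swap := by
    rintro ⟨i, j⟩ hp
    rw [HasAntidiagonal.mem_antidiagonal] at hp
    have hij : Even i ↔ Even j := by
      rw [← Nat.even_add, hp]
      exact even_two_mul n
    rcases Nat.even_or_odd i with hi | hi
    · have hj : Even j := hij.1 hi
      simp only [T, S, Prod.swap_prod_mk, if_pos hi, if_pos hj, hi.neg_one_pow, hj.neg_one_pow]
      ring
    · have hj : Odd j := Nat.not_even_iff_odd.1 (hij.not.1 (Nat.not_even_iff_odd.2 hi))
      simp only [T, S, Prod.swap_prod_mk, if_neg (Nat.not_even_iff_odd.2 hi),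
        if_neg (Nat.not_even_iff_odd.2 hj), hi.neg_one_pow, hj.neg_one_pow]
      ring
  have hsum := sum_congr rfl hpair
  rw [sum_add_distrib, sum_add_distrib, Nat.sum_antidiagonal_swap (f := T),
    Nat.sum_antidiagonal_swap (f := S)] at hsum
  rw [← Nat.sum_antidiagonal_eq_sum_range_succ fun i j => T (i, j)]
  linarith

theorem integral_Ioc_mul_integral_Ico {μ ν : Measure ℝ} [SFinite μ] [SFinite ν] {f g : ℝ → ℝ}
    {a x : ℝ} (hf : IntegrableOn f (Ioc a x) μ) (hg : IntegrableOn g (Ico a x) ν) :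
    (∫ s in Ioc a x, f s ∂μ) * (∫ t in Ico a x, g t ∂ν) =
      (∫ s in Ioc a x, f s * ∫ t in Ico a s, g t ∂ν ∂μ) +
        ∫ t in Ico a x, g t * ∫ s in Ioc a t, f s ∂μ ∂ν := by
  have hfg : Integrable (fun p : ℝ × ℝ => f p.1 * g p.2)
      ((μ.restrict (Ioc a x)).prod (ν.restrict (Ico a x))) := hf.mul_prod hg
  have hD : MeasurableSet {p : ℝ × ℝ | p.2 < p.1} := measurableSet_lt measurable_snd measurable_fst
  rw [← integral_prod_mul, ← integral_add_compl hD hfg,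
    ← integral_indicator hD, ← integral_indicator hD.compl,
    integral_prod _ ((integrable_indicator_iff hD).2 hfg.integrableOn),
    integral_prod_symm _ ((integrable_indicator_iff hD.compl).2 hfg.integrableOn)]
  congr 1
  · refine setIntegral_congr_fun measurableSet_Ioc fun s hs => ?_
    have hIco : Iio s ∩ Ico a x = Ico a s := by
      rw [inter_comm, Ico_inter_Iio, min_eq_right hs.2]
    rw [← integral_const_mul, ← hIco, ← Measure.restrict_restrict measurableSet_Iio,
      ← integral_indicator measurableSet_Iio]
    rfl
  · refine setIntegral_congr_fun measurableSet_Ico fun t ht => ?_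
    have hIoc : Iic t ∩ Ioc a x = Ioc a t := Iic_inter_Ioc_of_le ht.2.le
    rw [← integral_const_mul, ← hIoc, ← Measure.restrict_restrict measurableSet_Iic,
      ← integral_indicator measurableSet_Iic]
    congr 1
    ext s
    simp [indicator, mul_comm]

theorem Monotone.integrableOn_of_subset_Icc {μ : Measure ℝ} [IsLocallyFiniteMeasure μ]
    {f : ℝ → ℝ} (hf : Monotone f) {s : Set ℝ} {a b : ℝ} (hs : s ⊆ Icc a b) :
    IntegrableOn f s μ :=
  (hf.locallyIntegrable.integrableOn_isCompact isCompact_Icc).mono_set hs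

theorem monotone_setIntegral_Ioc {μ : Measure ℝ} [IsLocallyFiniteMeasure μ] {f : ℝ → ℝ}
    (hf : Monotone f) (hf0 : 0 ≤ f) (a : ℝ) : Monotone fun x => ∫ s in Ioc a x, f s ∂μ :=
  fun _ _ hxy => setIntegral_mono_set (hf.integrableOn_of_subset_Icc Ioc_subset_Icc_self)
    (ae_of_all _ hf0) (Ioc_subset_Ioc_right hxy).eventuallyLE

theorem monotone_setIntegral_Ico {μ : Measure ℝ} [IsLocallyFiniteMeasure μ] {f : ℝ → ℝ}
    (hf : Monotone f) (hf0 : 0 ≤ f) (a : ℝ) : Monotone fun x => ∫ s in Ico a x, f s ∂μ :=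
  fun _ _ hxy => setIntegral_mono_set (hf.integrableOn_of_subset_Icc Ico_subset_Icc_self)
    (ae_of_all _ hf0) (Ico_subset_Ico_right hxy).eventuallyLE

theorem iteratedIntegral_monotone_nonneg {μ ν : Measure ℝ} [IsLocallyFiniteMeasure μ]
    [IsLocallyFiniteMeasure ν] {F G : ℕ → ℝ → ℝ} (hF0 : ∀ x, F 0 x = 1) (hG0 : ∀ x, G 0 x = 1)
    (hF : ∀ n x, F (n + 1) x = ∫ ξ in Ioc 0 x, G n ξ ∂μ)
    (hG : ∀ n x, G (n + 1) x = ∫ ξ in Ico 0 x, F n ξ ∂ν) (n : ℕ) :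
    (Monotone (F n) ∧ 0 ≤ F n) ∧ (Monotone (G n) ∧ 0 ≤ G n) := by
  induction n with
  | zero =>
    rw [funext hF0, funext hG0]
    exact ⟨⟨monotone_const, fun _ => zero_le_one⟩, ⟨monotone_const, fun _ => zero_le_one⟩⟩
  | succ n ih =>
    obtain ⟨⟨hF_mono, hF_nonneg⟩, ⟨hG_mono, hG_nonneg⟩⟩ := ih
    rw [funext (hF n), funext (hG n)]
    exact ⟨⟨monotone_setIntegral_Ioc hG_mono hG_nonneg 0,
        fun _ => setIntegral_nonneg measurableSet_Ioc fun ξ _ => hG_nonneg ξ⟩,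
      ⟨monotone_setIntegral_Ico hF_mono hF_nonneg 0,
        fun _ => setIntegral_nonneg measurableSet_Ico fun ξ _ => hF_nonneg ξ⟩⟩

theorem iteratedIntegral_mul_succ {μ ν : Measure ℝ} [IsLocallyFiniteMeasure μ]
    [IsLocallyFiniteMeasure ν] {F G : ℕ → ℝ → ℝ} (hF0 : ∀ x, F 0 x = 1) (hG0 : ∀ x, G 0 x = 1)
    (hF : ∀ n x, F (n + 1) x = ∫ ξ in Ioc 0 x, G n ξ ∂μ)
    (hG : ∀ n x, G (n + 1) x = ∫ ξ in Ico 0 x, F n ξ ∂ν) (i j : ℕ) (x : ℝ) :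
    F (i + 1) x * G (j + 1) x =
      (∫ s in Ioc 0 x, G i s * G (j + 1) s ∂μ) + ∫ t in Ico 0 x, F (i + 1) t * F j t ∂ν := by
  have hmono := iteratedIntegral_monotone_nonneg hF0 hG0 hF hG (μ := μ) (ν := ν)
  rw [hF, hG, integral_Ioc_mul_integral_Ico
    ((hmono i).2.1.integrableOn_of_subset_Icc Ioc_subset_Icc_self)
    ((hmono j).1.1.integrableOn_of_subset_Icc Ico_subset_Icc_self)]
  simp only [← hF, ← hG, mul_comm (F j _)]

theorem stmt6_general (W : StieltjesFunction ℝ) (μV : Measure ℝ) [IsFiniteMeasure μV]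
    (F G : ℕ → ℝ → ℝ)
    (hF0 : ∀ x, F 0 x = 1) (hG0 : ∀ x, G 0 x = 1)
    (hF : ∀ (n : ℕ) (x : ℝ), F (n+1) x = ∫ ξ in Set.Ioc (0:ℝ) x, G n ξ ∂W.measure)
    (hG : ∀ (n : ℕ) (x : ℝ), G (n+1) x = ∫ ξ in Set.Ico (0:ℝ) x, F n ξ ∂μV) :
    ∀ n : ℕ, 1 ≤ n → ∀ x ∈ Set.Icc (0:ℝ) 1,
      ∑ j ∈ Finset.range (2*n+1),
        (-1:ℝ)^j * (if Even j then F j x else G j x) *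
          (if Even (2*n - j) then G (2*n-j) x else F (2*n-j) x) = 0 := by
  intro n hn x _
  set w : ℕ → ℕ → ℝ := fun i j => ∫ s in Ioc 0 x, G i s * G j s ∂W.measure
  set v : ℕ → ℕ → ℝ := fun i j => ∫ t in Ico 0 x, F i t * F j t ∂μV
  have hw : ∀ i j, w i j = w j i := fun i j => by simp only [w, mul_comm]
  have hv : ∀ i j, v i j = v j i := fun i j => by simp only [v, mul_comm]
  have h2n : 2 * n = (2 * n - 1) + 1 := by omega
  have hodd : Odd (2 * n - 1) := ⟨n - 1, by omega⟩
  rw [sum_range_parity_eq_sum_antidiagonal, h2n,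
    sum_antidiagonal_succ_neg_one_pow_mul (P := fun i j => F i x * G j x) (w := w) (v := v)
      (iteratedIntegral_mul_succ hF0 hG0 hF hG · · x)
      (fun j => by simp only [v, hF0, hG, one_mul]) (fun i => by simp only [w, hG0, hF, mul_one])]
  simp only [mul_sub, sum_sub_distrib]
  rw [sum_antidiagonal_neg_one_pow_mul_eq_zero hodd hv,
    sum_antidiagonal_neg_one_pow_mul_eq_zero hodd hw, sub_zero]

/-- With `F_n`, `G_n` the alternating iterated Stieltjes integrals at the diagonal
(`F₀ = G₀ = 1`, `F_{n+1}(x) = ∫_{(0,x]} G_n dW`, `G_{n+1}(x) = ∫_{[0,x)} F_n dV`, so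
`F₁(x) = W(x)`, `G₁(x) = V(x)`), setting `α_{2k} = (G_{2k}, F_{2k})`,
`α_{2k+1} = (F_{2k+1}, G_{2k+1})`, i.e. `α_n = (p_n, q_n)`, one has
`Σ_{j=0}^{2n} (−1)^j q_j(x) p_{2n−j}(x) = 0` for every `n ≥ 1` and `x ∈ [0,1]`. -/
theorem stmt6 (W : StieltjesFunction ℝ) (V : ℝ → ℝ) (μV : Measure ℝ) [IsFiniteMeasure μV]
    (hW : StrictMonoOn W (Set.Icc 0 1)) (hW0 : W 0 = 0)
    (hV : StrictMonoOn V (Set.Icc 0 1)) (hV0 : V 0 = 0)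
    (hVleft : ∀ y ∈ Set.Ioc (0:ℝ) 1, ContinuousWithinAt V (Set.Iic y) y)
    (hμV : ∀ a b : ℝ, 0 ≤ a → a ≤ b → b ≤ 1 →
      μV (Set.Ico a b) = ENNReal.ofReal (V b - V a))
    (F G : ℕ → ℝ → ℝ)
    (hF0 : ∀ x, F 0 x = 1) (hG0 : ∀ x, G 0 x = 1)
    (hF : ∀ (n : ℕ) (x : ℝ), F (n+1) x = ∫ ξ in Set.Ioc (0:ℝ) x, G n ξ ∂W.measure)
    (hG : ∀ (n : ℕ) (x : ℝ), G (n+1) x = ∫ ξ in Set.Ico (0:ℝ) x, F n ξ ∂μV) :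
    ∀ n : ℕ, 1 ≤ n → ∀ x ∈ Set.Icc (0:ℝ) 1,
      ∑ j ∈ Finset.range (2*n+1),
        (-1:ℝ)^j * (if Even j then F j x else G j x) *
          (if Even (2*n - j) then G (2*n-j) x else F (2*n-j) x) = 0 :=
  stmt6_general W μV F G hF0 hG0 hF hG
end

section
/- Let H be a separable Hilbert space with orthonormal basis (ν_i)_{i≥0} and let (γ_i)_{i≥0} be reals with γ_i ≥ 1. Fix s ≥ 0, m > 0. Define H^r = {f ∈ H : Σ_i γ_i^r ⟨f, ν_i⟩² < ∞} with inner product ⟨f,g⟩_r = Σ γ_i^r ⟨f,ν_i⟩⟨g,ν_i⟩. Suppose f ∈ H^m and u ∈ H^s satisfies the weak equation ⟨u, v⟩_{H^s} = ⟨f, v⟩_H for all v ∈ H^s. Then u ∈ H^{m+2s}, and its coefficients satisfy ⟨u, ν_i⟩ = γ_i^{−s} ⟨f, ν_i⟩. -/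
/-- Abstract spectral elliptic regularity: with `(ν_i)` an orthonormal basis of
eigenvectors, eigenvalues `γ_i ≥ 1`, `H^r = {f : Σ γ_i^r ⟨f,ν_i⟩² < ∞}`, if `f ∈ H^m`
and `u ∈ H^s` solves the weak equation `⟨u,v⟩_{H^s} = ⟨f,v⟩` for all `v ∈ H^s`, then
`u ∈ H^{m+2s}` and `⟨u,ν_i⟩ = γ_i^{−s} ⟨f,ν_i⟩`. -/
theorem stmt18 {H : Type*} [NormedAddCommGroup H] [InnerProductSpace ℝ H]
    [CompleteSpace H]
    (b : HilbertBasis ℕ ℝ H) (γ : ℕ → ℝ) (hγ : ∀ i, 1 ≤ γ i)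
    (s m : ℝ) (hs : 0 ≤ s) (hm : 0 < m) (f u : H)
    (hf : Summable fun i => γ i ^ m * (@inner ℝ _ _ f (b i))^2)
    (hu : Summable fun i => γ i ^ s * (@inner ℝ _ _ u (b i))^2)
    (hweak : ∀ v : H,
      (Summable fun i => γ i ^ s * (@inner ℝ _ _ v (b i))^2) →
      ∑' i, γ i ^ s * (@inner ℝ _ _ u (b i)) * (@inner ℝ _ _ v (b i))
        = @inner ℝ _ _ f v) :
    (Summable fun i => γ i ^ (m + 2*s) * (@inner ℝ _ _ u (b i))^2) ∧
    ∀ i, @inner ℝ _ _ u (b i) = γ i ^ (-s) * @inner ℝ _ _ f (b i) := by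
  have hpos : ∀ i, (0:ℝ) < γ i := fun i => lt_of_lt_of_le one_pos (hγ i)
  have hon := b.orthonormal
  have hinner : ∀ i j : ℕ, @inner ℝ _ _ (b i) (b j) = if i = j then (1:ℝ) else 0 :=
    orthonormal_iff_ite.mp hon
  have key : ∀ i, @inner ℝ _ _ u (b i) = γ i ^ (-s) * @inner ℝ _ _ f (b i) := by
    intro i
    have hsum : Summable fun j => γ j ^ s * (@inner ℝ _ _ (b i) (b j))^2 := by
      apply summable_of_ne_finset_zero (s := {i})
      intro j hj
      simp only [Finset.mem_singleton] at hj
      rw [hinner]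
      simp [Ne.symm hj]
    have h := hweak (b i) hsum
    have heq : (∑' j, γ j ^ s * (@inner ℝ _ _ u (b j)) * (@inner ℝ _ _ (b i) (b j)))
        = γ i ^ s * (@inner ℝ _ _ u (b i)) := by
      rw [tsum_eq_single i]
      · rw [hinner]; simp
      · intro j hj
        rw [hinner]
        simp [Ne.symm hj]
    have hfi : @inner ℝ _ _ f (b i) = γ i ^ s * (@inner ℝ _ _ u (b i)) := by
      rw [← heq, h]
    rw [hfi, Real.rpow_neg (hpos i).le]
    have hne : γ i ^ s ≠ 0 := (Real.rpow_pos_of_pos (hpos i) s).ne'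
    field_simp
  refine ⟨?_, key⟩
  have : ∀ i, γ i ^ (m + 2*s) * (@inner ℝ _ _ u (b i))^2
      = γ i ^ m * (@inner ℝ _ _ f (b i))^2 := by
    intro i
    rw [key i, mul_pow, ← Real.rpow_natCast (γ i ^ (-s)) 2,
      ← Real.rpow_mul (hpos i).le, ← mul_assoc, ← Real.rpow_add (hpos i)]
    norm_num
    ring_nf
    exact Or.inl trivial
  exact (Summable.congr hf (fun i => (this i).symm))
end

section
/- Let X be a vector space with an increasing sequence of Hilbertian norms ‖·‖_n (n ∈ ℕ), let X_n denote the completion of X under ‖·‖_n, and suppose there is a sequence of vectors (ν_i) and scalars (λ_i) with λ_i ≥ c i^{q} for some c > 0, q > 0, such that (ν_i / λ_i^m)_i is an orthonormal basis of X_m for each m and ‖ν_i‖_n = λ_i^n. Then for every n there exists m > n (any m with 2q(m−n) > 1) such that the inclusion X_m ↪ X_n is Hilbert–Schmidt; hence X_∞ = ∩_n X_n is a nuclear countably Hilbert space. -/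
/-- Nuclearity criterion: given a countably Hilbert scale with norms `‖·‖_n`, vectors
`(ν_i)` with `‖ν_i‖_n = λ_i^n` such that `(ν_i/λ_i^m)` is an orthonormal basis of `X_m`,
and `λ_i ≥ c i^q` with `c, q > 0`, then for every `n` and any `m > n` with
`2q(m−n) > 1`, the inclusion `X_m ↪ X_n` is Hilbert–Schmidt:
`Σ_i ‖ν_i/λ_i^m‖_n² < ∞`; hence `X_∞ = ∩ X_n` is nuclear. -/
theorem stmt19 {X : Type*} [AddCommGroup X] [Module ℝ X]
    (Nn : ℕ → X → ℝ) (ν : ℕ → X) (lam : ℕ → ℝ) (c q : ℝ)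
    (hc : 0 < c) (hq : 0 < q)
    (hpos : ∀ i, 0 < lam i)
    (hlow : ∀ i : ℕ, 1 ≤ i → lam i ≥ c * (i : ℝ) ^ q)
    (hhom : ∀ (n : ℕ) (r : ℝ) (x : X), Nn n (r • x) = |r| * Nn n x)
    (hnorm : ∀ (n i : ℕ), Nn n (ν i) = lam i ^ (n : ℝ)) :
    ∀ n m : ℕ, n < m → 2*q*((m : ℝ) - n) > 1 →
      Summable fun i : ℕ => (Nn n ((lam i ^ (-(m : ℝ))) • ν i))^2 := by
  intro n m hnm hqmn
  set e : ℝ := 2 * ((n : ℝ) - m) with he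
  have hne : e < 0 := by
    have : (n : ℝ) < m := by exact_mod_cast hnm
    nlinarith
  -- rewrite the summand
  have key : ∀ i, (Nn n ((lam i ^ (-(m : ℝ))) • ν i))^2 = lam i ^ e := by
    intro i
    rw [hhom, hnorm, abs_of_pos (Real.rpow_pos_of_pos (hpos i) _),
      ← Real.rpow_add (hpos i), ← Real.rpow_natCast (lam i ^ (-(m:ℝ) + n)) 2,
      ← Real.rpow_mul (hpos i).le]
    norm_num [he]
    ring_nf
  rw [show (fun i : ℕ => (Nn n ((lam i ^ (-(m : ℝ))) • ν i))^2) = fun i => lam i ^ e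
      from funext key]
  -- compare with c^e * i^(q*e)
  have hsum : Summable fun i : ℕ => c ^ e * (i : ℝ) ^ (q * e) := by
    apply Summable.mul_left
    rw [Real.summable_nat_rpow]
    nlinarith
  rw [← summable_nat_add_iff 1] at hsum ⊢
  apply Summable.of_nonneg_of_le (fun i => (Real.rpow_pos_of_pos (hpos _) _).le) _ hsum
  intro i
  have h1 : (1 : ℕ) ≤ i + 1 := le_add_self
  have hip : (0 : ℝ) < (i + 1 : ℕ) := by positivity
  have hcb : 0 < c * ((i + 1 : ℕ) : ℝ) ^ q := by positivity
  calc lam (i + 1) ^ e ≤ (c * ((i + 1 : ℕ) : ℝ) ^ q) ^ e := by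
        exact Real.rpow_le_rpow_of_nonpos hcb (hlow _ h1) hne.le
    _ = c ^ e * ((i + 1 : ℕ) : ℝ) ^ (q * e) := by
        rw [Real.mul_rpow hc.le (Real.rpow_pos_of_pos hip q).le,
          ← Real.rpow_mul hip.le]
end
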